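/- Let y_1, …, y_k ∈ ℝ^d, let δ > 0, and let x_{*,δ} be a minimizer of F_δ. Define the sequences α₀ = 3/4, α_{t+1} = (α_t/2)·(√(α_t² + 4) − α_t), and x⁽⁰⁾ = v⁽⁰⁾ = ȳ := (1/k)·Σ_{i=1}^k y_i, x⁽ᵗ⁺¹⁾ = v⁽ᵗ⁾ − δ·∇F_δ(v⁽ᵗ⁾), v⁽ᵗ⁺¹⁾ = x⁽ᵗ⁺¹⁾ + (α_t(1 − α_t)/(α_t² + α_{t+1}))·(x⁽ᵗ⁺¹⁾ − x⁽ᵗ⁾). Then for all t ≥ 0, F_δ(x⁽ᵗ⁾) − F_δ(x_{*,δ}) ≤ (16/(9(t+1)²))·[ F_δ(ȳ) + (9/(8δ))·F_δ(ȳ)² ]. -/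

import Mathlib

open Finset
open scoped InnerProductSpace

/-!
`F_δ` is convex and `1/δ`-smooth: each term `√(‖u‖² + δ²)` lies above its tangent planes by
Cauchy–Schwarz for `(u, δ)` in `E × ℝ`, and below its tangent paraboloids of curvature `1/δ` by
AM-GM and `δ ≤ √(‖u‖² + δ²)`. The scheme is Nesterov's accelerated gradient method with step `δ`;
writing `v t = (1 - α t) x t + α t z t`, the points `z t` take gradient steps of length `δ / α t`,
and the potential `F_δ (x (t+1)) - F_δ x⋆ + α t² / (2δ) ‖z (t+1) - x⋆‖²` shrinks by the factor
`1 - α (t+1) = α (t+1)² / α t²` at each step. Hence `F_δ (x (t+1)) - F_δ x⋆ = O(α t²)`, and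
`1 / α (t+1) ≥ 1 / α t + 1/2` gives `α t ≤ 2 / (t + 2)`. The initial potential is bounded by
`F_δ ȳ` since `‖ȳ - x⋆‖ ≤ F_δ x⋆ ≤ F_δ ȳ`.
-/

variable {E : Type*} [NormedAddCommGroup E]

noncomputable def charbonnier (δ : ℝ) (u : E) : ℝ := √(‖u‖ ^ 2 + δ ^ 2)

lemma sq_charbonnier (δ : ℝ) (u : E) : charbonnier δ u ^ 2 = ‖u‖ ^ 2 + δ ^ 2 :=
  Real.sq_sqrt (by positivity)

lemma abs_le_charbonnier (δ : ℝ) (u : E) : |δ| ≤ charbonnier δ u :=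
  Real.abs_le_sqrt (by nlinarith [sq_nonneg ‖u‖])

lemma charbonnier_pos {δ : ℝ} (hδ : δ ≠ 0) (u : E) : 0 < charbonnier δ u :=
  (abs_pos.mpr hδ).trans_le (abs_le_charbonnier δ u)

noncomputable def charbonnierMean {k : ℕ} (y : Fin k → E) (δ : ℝ) (z : E) : ℝ :=
  (k : ℝ)⁻¹ * ∑ i, charbonnier δ (z - y i)

lemma charbonnierMean_nonneg {k : ℕ} (y : Fin k → E) (δ : ℝ) (z : E) :
    0 ≤ charbonnierMean y δ z := by
  unfold charbonnierMean charbonnier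
  positivity

variable [InnerProductSpace ℝ E]

lemma inner_add_sq_le_charbonnier_mul (δ : ℝ) (u w : E) :
    ⟪u, w⟫_ℝ + δ ^ 2 ≤ charbonnier δ u * charbonnier δ w := by
  have hCS : ⟪u, w⟫_ℝ ≤ ‖u‖ * ‖w‖ := real_inner_le_norm u w
  have hCS' : ⟪u, w⟫_ℝ * ⟪u, w⟫_ℝ ≤ ⟪u, u⟫_ℝ * ⟪w, w⟫_ℝ := real_inner_mul_inner_self_le u w
  rw [real_inner_self_eq_norm_sq, real_inner_self_eq_norm_sq] at hCS'
  refine (le_abs_self _).trans (Real.abs_le_sqrt ?_) |>.trans_eq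
    (Real.sqrt_mul (by positivity) _)
  nlinarith [two_mul_le_add_sq ‖u‖ ‖w‖, sq_nonneg δ]

lemma charbonnier_add_inner_div_le {δ : ℝ} (hδ : δ ≠ 0) (u p : E) :
    charbonnier δ u + ⟪u, p⟫_ℝ / charbonnier δ u ≤ charbonnier δ (u + p) := by
  have hs := charbonnier_pos hδ u
  have h := inner_add_sq_le_charbonnier_mul δ u (u + p)
  rw [inner_add_right, real_inner_self_eq_norm_sq, add_right_comm, ← sq_charbonnier δ u] at h
  rw [← le_sub_iff_add_le', div_le_iff₀ hs]
  nlinarith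

lemma charbonnier_add_le {δ : ℝ} (hδ : 0 < δ) (u p : E) :
    charbonnier δ (u + p) ≤
      charbonnier δ u + ⟪u, p⟫_ℝ / charbonnier δ u + ‖p‖ ^ 2 / (2 * δ) := by
  set s := charbonnier δ u
  have hs : 0 < s := charbonnier_pos hδ.ne' u
  have hδs : δ ≤ s := (le_abs_self δ).trans (abs_le_charbonnier δ u)
  have hamgm := two_mul_le_add_sq s (charbonnier δ (u + p))
  rw [sq_charbonnier, sq_charbonnier, norm_add_sq_real] at hamgm
  have hquad : ‖p‖ ^ 2 / 2 ≤ s * (‖p‖ ^ 2 / (2 * δ)) := by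
    rw [mul_div_assoc', div_le_div_iff₀ (by norm_num) (by positivity)]
    nlinarith [sq_nonneg ‖p‖]
  refine le_of_mul_le_mul_left ?_ hs
  rw [mul_add, mul_add, mul_div_cancel₀ _ hs.ne', ← sq]
  nlinarith [sq_charbonnier δ u]

section CharbonnierMean

variable {k : ℕ} (y : Fin k → E) (δ : ℝ)

noncomputable def charbonnierGrad (z : E) : E :=
  (k : ℝ)⁻¹ • ∑ i, (charbonnier δ (z - y i))⁻¹ • (z - y i)

lemma inner_charbonnierGrad (w q : E) :
    ⟪charbonnierGrad y δ w, q⟫_ℝ =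
      (k : ℝ)⁻¹ * ∑ i, ⟪w - y i, q⟫_ℝ / charbonnier δ (w - y i) := by
  simp only [charbonnierGrad, real_inner_smul_left, sum_inner, div_eq_inv_mul]

variable {δ}

lemma charbonnierMean_add_inner_le (hδ : δ ≠ 0) (w z : E) :
    charbonnierMean y δ w + ⟪charbonnierGrad y δ w, z - w⟫_ℝ ≤ charbonnierMean y δ z := by
  rw [inner_charbonnierGrad, charbonnierMean, charbonnierMean, ← mul_add, ← sum_add_distrib]
  gcongr with i
  simpa using charbonnier_add_inner_div_le hδ (w - y i) (z - w)

lemma charbonnierMean_le (hk : 0 < k) (hδ : 0 < δ) (w z : E) :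
    charbonnierMean y δ z ≤
      charbonnierMean y δ w + ⟪charbonnierGrad y δ w, z - w⟫_ℝ + ‖z - w‖ ^ 2 / (2 * δ) := by
  have hquad : ‖z - w‖ ^ 2 / (2 * δ) = (k : ℝ)⁻¹ * ∑ _i : Fin k, ‖z - w‖ ^ 2 / (2 * δ) := by
    rw [sum_const, card_univ, Fintype.card_fin, nsmul_eq_mul, inv_mul_cancel_left₀]
    exact_mod_cast hk.ne'
  rw [inner_charbonnierGrad, hquad, charbonnierMean, charbonnierMean, ← mul_add, ← mul_add,
    ← sum_add_distrib, ← sum_add_distrib]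
  gcongr with i
  simpa using charbonnier_add_le hδ (w - y i) (z - w)

lemma norm_mean_sub_le_charbonnierMean (hk : 0 < k) (z : E) :
    ‖(k : ℝ)⁻¹ • ∑ i, y i - z‖ ≤ charbonnierMean y δ z := by
  have hk' : (k : ℝ) ≠ 0 := by exact_mod_cast hk.ne'
  have hmean : (k : ℝ)⁻¹ • ∑ i, y i - z = (k : ℝ)⁻¹ • ∑ i, (y i - z) := by
    rw [sum_sub_distrib, smul_sub, sum_const, card_univ, Fintype.card_fin,
      ← Nat.cast_smul_eq_nsmul ℝ, inv_smul_smul₀ hk']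
  rw [hmean, norm_smul, norm_inv, Real.norm_natCast, charbonnierMean]
  gcongr
  refine (norm_sum_le _ _).trans (sum_le_sum fun i _ => ?_)
  rw [norm_sub_rev]
  exact Real.le_sqrt_of_sq_le (by nlinarith [sq_nonneg δ])

end CharbonnierMean

lemma inv_add_half_le_inv_of_sq_eq {a q : ℝ} (ha : 0 < a) (hq : 0 < q)
    (h : q ^ 2 = a ^ 2 * (1 - q)) : a⁻¹ + 1 / 2 ≤ q⁻¹ := by
  have hqa : q * (2 + a) ≤ 2 * a := by
    nlinarith [mul_pos ha hq, mul_pos (mul_pos ha ha) hq, pow_pos ha 4]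
  rw [inv_eq_one_div, inv_eq_one_div, div_add_div _ _ ha.ne' two_ne_zero,
    div_le_div_iff₀ (by positivity) hq]
  linarith

def IsNesterovSeq (α : ℕ → ℝ) : Prop := ∀ t, α (t + 1) = α t / 2 * (√(α t ^ 2 + 4) - α t)

namespace IsNesterovSeq

variable {α : ℕ → ℝ}

lemma sq_succ (hα : IsNesterovSeq α) (t : ℕ) : α (t + 1) ^ 2 = α t ^ 2 * (1 - α (t + 1)) := by
  have hr : √(α t ^ 2 + 4) ^ 2 = α t ^ 2 + 4 := Real.sq_sqrt (by positivity)
  rw [hα t]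
  linear_combination (α t ^ 2 / 4) * hr

lemma pos (hα : IsNesterovSeq α) (h0 : 0 < α 0) (t : ℕ) : 0 < α t := by
  induction t with
  | zero => exact h0
  | succ t ih =>
    have hr : α t < √(α t ^ 2 + 4) := Real.lt_sqrt_of_sq_lt (by linarith)
    rw [hα t]
    exact mul_pos (half_pos ih) (sub_pos.mpr hr)

lemma le_two_div (hα : IsNesterovSeq α) (h0 : 0 < α 0) (h1 : α 0 ≤ 1) (t : ℕ) :
    α t ≤ 2 / (t + 2) := by
  have hpos := hα.pos h0
  suffices ((t : ℝ) + 2) / 2 ≤ (α t)⁻¹ by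
    rwa [le_inv_comm₀ (by positivity) (hpos t), inv_div] at this
  induction t with
  | zero => simpa using (one_le_inv₀ h0).mpr h1
  | succ t ih =>
    have := inv_add_half_le_inv_of_sq_eq (hpos t) (hpos (t + 1)) (hα.sq_succ t)
    push_cast
    linarith

lemma le_one (hα : IsNesterovSeq α) (h0 : 0 < α 0) (h1 : α 0 ≤ 1) (t : ℕ) : α t ≤ 1 :=
  (hα.le_two_div h0 h1 t).trans <|
    (div_le_one (by positivity)).mpr (by linarith [(t.cast_nonneg : (0 : ℝ) ≤ t)])

end IsNesterovSeq

section Nesterov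

variable {F : E → ℝ} {g : E → E} {η : ℝ}

lemma apply_gradient_step_le (hη : 0 < η)
    (hsmooth : ∀ w z, F z ≤ F w + ⟪g w, z - w⟫_ℝ + ‖z - w‖ ^ 2 / (2 * η)) (w : E) :
    F (w - η • g w) ≤ F w - η / 2 * ‖g w‖ ^ 2 := by
  have h := hsmooth w (w - η • g w)
  rw [sub_sub_cancel_left, inner_neg_right, real_inner_smul_right, real_inner_self_eq_norm_sq,
    norm_neg, norm_smul, Real.norm_of_nonneg hη.le] at h
  have hq : (η * ‖g w‖) ^ 2 / (2 * η) = η / 2 * ‖g w‖ ^ 2 := by field_simp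
  linarith

lemma nesterov_step_potential_le (hη : 0 < η)
    (hconv : ∀ w z, F w + ⟪g w, z - w⟫_ℝ ≤ F z)
    (hsmooth : ∀ w z, F z ≤ F w + ⟪g w, z - w⟫_ℝ + ‖z - w‖ ^ 2 / (2 * η))
    {a : ℝ} (ha : 0 < a) (ha1 : a ≤ 1) (x z xs : E) :
    F ((1 - a) • x + a • z - η • g ((1 - a) • x + a • z)) - F xs
        + a ^ 2 / (2 * η) * ‖z - (η / a) • g ((1 - a) • x + a • z) - xs‖ ^ 2
      ≤ (1 - a) * (F x - F xs) + a ^ 2 / (2 * η) * ‖z - xs‖ ^ 2 := by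
  set v := (1 - a) • x + a • z
  have hdescent := apply_gradient_step_le hη hsmooth v
  have hx := mul_le_mul_of_nonneg_left (hconv v x) (sub_nonneg.mpr ha1)
  have hxs := mul_le_mul_of_nonneg_left (hconv v xs) ha.le
  have hdir : (1 - a) * ⟪g v, x - v⟫_ℝ + a * ⟪g v, xs - v⟫_ℝ = a * ⟪g v, xs - z⟫_ℝ := by
    rw [← real_inner_smul_right, ← real_inner_smul_right, ← inner_add_right,
      ← real_inner_smul_right]
    congr 1
    module
  have hnorm : a ^ 2 / (2 * η) * ‖z - (η / a) • g v - xs‖ ^ 2 =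
      a ^ 2 / (2 * η) * ‖z - xs‖ ^ 2 + a * ⟪g v, xs - z⟫_ℝ + η / 2 * ‖g v‖ ^ 2 := by
    rw [sub_right_comm, norm_sub_sq_real, real_inner_smul_right, norm_smul,
      Real.norm_of_nonneg (div_pos hη ha).le, real_inner_comm, ← neg_sub xs z, inner_neg_right]
    field_simp
    ring
  linarith

noncomputable def nesterovAux (α : ℕ → ℝ) (x v : ℕ → E) (t : ℕ) : E :=
  (α t)⁻¹ • (v t - (1 - α t) • x t)

section NesterovAux

variable {α : ℕ → ℝ} {x v : ℕ → E}

lemma eq_add_nesterovAux (t : ℕ) (ht : α t ≠ 0) :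
    v t = (1 - α t) • x t + α t • nesterovAux α x v t := by
  rw [nesterovAux, smul_inv_smul₀ ht, add_sub_cancel]

lemma nesterovAux_zero (h0 : α 0 ≠ 0) (hv0 : v 0 = x 0) : nesterovAux α x v 0 = x 0 := by
  rw [nesterovAux, hv0, show x 0 - (1 - α 0) • x 0 = α 0 • x 0 by module, inv_smul_smul₀ h0]

lemma nesterovAux_succ (hpos : ∀ t, 0 < α t)
    (hsq : ∀ t, α (t + 1) ^ 2 = α t ^ 2 * (1 - α (t + 1)))
    (hxrec : ∀ t, x (t + 1) = v t - η • g (v t))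
    (hvrec : ∀ t, v (t + 1) = x (t + 1) +
      ((α t * (1 - α t)) / ((α t) ^ 2 + α (t + 1))) • (x (t + 1) - x t)) (t : ℕ) :
    nesterovAux α x v (t + 1) = nesterovAux α x v t - (η / α t) • g (v t) := by
  have ht := (hpos t).ne'
  have ht1 := (hpos (t + 1)).ne'
  have hcoef : α t * (1 - α t) / (α t ^ 2 + α (t + 1)) = α (t + 1) * (1 - α t) / α t := by
    rw [div_eq_div_iff (by linarith [hpos t, hpos (t + 1), sq_nonneg (α t)]) ht]
    linear_combination (α t - 1) * hsq t
  have hstep : nesterovAux α x v t - (η / α t) • g (v t) =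
      (α t)⁻¹ • (x (t + 1) - (1 - α t) • x t) := by
    rw [nesterovAux, hxrec]
    module
  rw [hstep, nesterovAux, hvrec, hcoef]
  match_scalars <;> field_simp
  ring

end NesterovAux

lemma nesterov_potential_le (hη : 0 < η)
    (hconv : ∀ w z, F w + ⟪g w, z - w⟫_ℝ ≤ F z)
    (hsmooth : ∀ w z, F z ≤ F w + ⟪g w, z - w⟫_ℝ + ‖z - w‖ ^ 2 / (2 * η))
    {α : ℕ → ℝ} (hpos : ∀ t, 0 < α t) (hle : ∀ t, α t ≤ 1)
    (hsq : ∀ t, α (t + 1) ^ 2 = α t ^ 2 * (1 - α (t + 1)))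
    {x v : ℕ → E} (hv0 : v 0 = x 0) (hxrec : ∀ t, x (t + 1) = v t - η • g (v t))
    (hvrec : ∀ t, v (t + 1) = x (t + 1) +
      ((α t * (1 - α t)) / ((α t) ^ 2 + α (t + 1))) • (x (t + 1) - x t))
    (xs : E) (t : ℕ) :
    F (x (t + 1)) - F xs + α t ^ 2 / (2 * η) * ‖nesterovAux α x v (t + 1) - xs‖ ^ 2 ≤
      α t ^ 2 * ((1 - α 0) / α 0 ^ 2 * (F (x 0) - F xs) + ‖x 0 - xs‖ ^ 2 / (2 * η)) := by
  have hv t : v t = _ := eq_add_nesterovAux (x := x) t (hpos t).ne'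
  have hz := nesterovAux_succ hpos hsq hxrec hvrec
  have hz0 := nesterovAux_zero (hpos 0).ne' hv0
  set z := nesterovAux α x v
  have hstep : ∀ t, F (x (t + 1)) - F xs + α t ^ 2 / (2 * η) * ‖z (t + 1) - xs‖ ^ 2 ≤
      (1 - α t) * (F (x t) - F xs) + α t ^ 2 / (2 * η) * ‖z t - xs‖ ^ 2 := fun t => by
    simpa only [← hv, ← hxrec, ← hz] using
      nesterov_step_potential_le hη hconv hsmooth (hpos t) (hle t) (x t) (z t) xs
  induction t with
  | zero =>
    have h0 := (hpos 0).ne'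
    have hC : α 0 ^ 2 * ((1 - α 0) / α 0 ^ 2 * (F (x 0) - F xs) + ‖x 0 - xs‖ ^ 2 / (2 * η)) =
        (1 - α 0) * (F (x 0) - F xs) + α 0 ^ 2 / (2 * η) * ‖x 0 - xs‖ ^ 2 := by
      field_simp
    simpa only [hC, hz0] using hstep 0
  | succ t ih =>
    have h1 : 0 ≤ 1 - α (t + 1) := sub_nonneg.mpr (hle (t + 1))
    calc _ ≤ (1 - α (t + 1)) * (F (x (t + 1)) - F xs)
            + α (t + 1) ^ 2 / (2 * η) * ‖z (t + 1) - xs‖ ^ 2 := hstep (t + 1)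
      _ = (1 - α (t + 1)) * (F (x (t + 1)) - F xs
            + α t ^ 2 / (2 * η) * ‖z (t + 1) - xs‖ ^ 2) := by rw [hsq]; ring
      _ ≤ _ := mul_le_mul_of_nonneg_left ih h1
      _ = _ := by rw [hsq]; ring

theorem nesterov_suboptimality_le (hη : 0 < η)
    (hconv : ∀ w z, F w + ⟪g w, z - w⟫_ℝ ≤ F z)
    (hsmooth : ∀ w z, F z ≤ F w + ⟪g w, z - w⟫_ℝ + ‖z - w‖ ^ 2 / (2 * η))
    {α : ℕ → ℝ} (hpos : ∀ t, 0 < α t) (hle : ∀ t, α t ≤ 1)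
    (hsq : ∀ t, α (t + 1) ^ 2 = α t ^ 2 * (1 - α (t + 1)))
    {x v : ℕ → E} (hv0 : v 0 = x 0) (hxrec : ∀ t, x (t + 1) = v t - η • g (v t))
    (hvrec : ∀ t, v (t + 1) = x (t + 1) +
      ((α t * (1 - α t)) / ((α t) ^ 2 + α (t + 1))) • (x (t + 1) - x t))
    (xs : E) (t : ℕ) :
    F (x (t + 1)) - F xs ≤
      α t ^ 2 * ((1 - α 0) / α 0 ^ 2 * (F (x 0) - F xs) + ‖x 0 - xs‖ ^ 2 / (2 * η)) := by
  have hpot := nesterov_potential_le hη hconv hsmooth hpos hle hsq hv0 hxrec hvrec xs t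
  have hdist : 0 ≤ α t ^ 2 / (2 * η) * ‖nesterovAux α x v (t + 1) - xs‖ ^ 2 := by positivity
  linarith

end Nesterov

/-- **Sub-optimality bound for accelerated gradient descent on the Charbonnier
relaxation** (Lemma `lem:subopt`). With `F_δ(z) = (1/k) Σ √(‖z − yᵢ‖² + δ²)`,
`∇F_δ(z) = (1/k) Σ (z − yᵢ)/√(‖z − yᵢ‖² + δ²)`, minimizer `x_{*,δ}`, step size `δ`,
momentum coefficients `α₀ = 3/4`, `α_{t+1} = (α_t/2)(√(α_t² + 4) − α_t)`, iterates
`x⁽⁰⁾ = v⁽⁰⁾ = ȳ`, `x⁽ᵗ⁺¹⁾ = v⁽ᵗ⁾ − δ ∇F_δ(v⁽ᵗ⁾)`,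
`v⁽ᵗ⁺¹⁾ = x⁽ᵗ⁺¹⁾ + (α_t(1−α_t)/(α_t²+α_{t+1}))(x⁽ᵗ⁺¹⁾ − x⁽ᵗ⁾)`, one has for all `t`
`F_δ(x⁽ᵗ⁾) − F_δ(x_{*,δ}) ≤ (16/(9(t+1)²))·(F_δ(ȳ) + (9/(8δ)) F_δ(ȳ)²)`. -/
theorem stmt15 {d k : ℕ} (hk : 0 < k)
    (y : Fin k → EuclideanSpace ℝ (Fin d))
    (δ : ℝ) (hδ : 0 < δ)
    (Fδ : EuclideanSpace ℝ (Fin d) → ℝ)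
    (hFδ : ∀ z, Fδ z = (k : ℝ)⁻¹ * ∑ i, Real.sqrt (‖z - y i‖ ^ 2 + δ ^ 2))
    (gradFδ : EuclideanSpace ℝ (Fin d) → EuclideanSpace ℝ (Fin d))
    (hgrad : ∀ z, gradFδ z =
      (k : ℝ)⁻¹ • ∑ i, (Real.sqrt (‖z - y i‖ ^ 2 + δ ^ 2))⁻¹ • (z - y i))
    (xstar : EuclideanSpace ℝ (Fin d)) (hxstar : ∀ z, Fδ xstar ≤ Fδ z)
    (ybar : EuclideanSpace ℝ (Fin d)) (hybar : ybar = (k : ℝ)⁻¹ • ∑ i, y i)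
    (α : ℕ → ℝ) (hα0 : α 0 = 3 / 4)
    (hα : ∀ t, α (t + 1) = (α t / 2) * (Real.sqrt ((α t) ^ 2 + 4) - α t))
    (x v : ℕ → EuclideanSpace ℝ (Fin d))
    (hx0 : x 0 = ybar) (hv0 : v 0 = ybar)
    (hxrec : ∀ t, x (t + 1) = v t - δ • gradFδ (v t))
    (hvrec : ∀ t, v (t + 1) = x (t + 1) +
      ((α t * (1 - α t)) / ((α t) ^ 2 + α (t + 1))) • (x (t + 1) - x t)) :
    ∀ t : ℕ, Fδ (x t) - Fδ xstar ≤
      (16 / (9 * ((t : ℝ) + 1) ^ 2)) * (Fδ ybar + (9 / (8 * δ)) * (Fδ ybar) ^ 2) := by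
  obtain rfl : Fδ = charbonnierMean y δ := funext hFδ
  obtain rfl : gradFδ = charbonnierGrad y δ := funext hgrad
  replace hα : IsNesterovSeq α := hα
  have h0 : 0 < α 0 := by norm_num [hα0]
  have h1 : α 0 ≤ 1 := by norm_num [hα0]
  have hrate := nesterov_suboptimality_le hδ (charbonnierMean_add_inner_le y hδ.ne')
    (charbonnierMean_le y hk hδ) (hα.pos h0) (hα.le_one h0 h1) hα.sq_succ
    (hv0.trans hx0.symm) hxrec hvrec xstar
  set F := charbonnierMean y δ
  have hF_xstar : 0 ≤ F xstar := charbonnierMean_nonneg y δ xstar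
  have hF_ybar : 0 ≤ F ybar := charbonnierMean_nonneg y δ ybar
  have hdist : ‖ybar - xstar‖ ≤ F ybar :=
    (hybar ▸ norm_mean_sub_le_charbonnierMean y hk xstar).trans (hxstar ybar)
  have hC : (1 - α 0) / α 0 ^ 2 * (F (x 0) - F xstar) + ‖x 0 - xstar‖ ^ 2 / (2 * δ) ≤
      4 / 9 * F ybar + F ybar ^ 2 / (2 * δ) := by
    rw [hx0, hα0, show (1 - 3 / 4 : ℝ) / (3 / 4) ^ 2 = 4 / 9 by norm_num]
    gcongr 4 / 9 * ?_ + ?_ ^ 2 / (2 * δ)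
    linarith
  intro t
  rcases t with _ | t
  · have : 0 ≤ 9 / (8 * δ) * F ybar ^ 2 := by positivity
    rw [hx0, Nat.cast_zero]
    linarith [hxstar ybar]
  · calc F (x (t + 1)) - F xstar ≤ α t ^ 2 * (4 / 9 * F ybar + F ybar ^ 2 / (2 * δ)) :=
          (hrate t).trans (mul_le_mul_of_nonneg_left hC (sq_nonneg _))
      _ ≤ (2 / (t + 2)) ^ 2 * (4 / 9 * F ybar + F ybar ^ 2 / (2 * δ)) := by
          gcongr
          exacts [(hα.pos h0 t).le, hα.le_two_div h0 h1 t]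
      _ = _ := by push_cast; field_simp; ring
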